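/- Let (ψ_n) and (h_n) be real sequences and a, b : [0,T] → ℝ continuous, R : [0,T] → ℝ continuous, λ_n = n²π². Suppose ∑ ψ_n² < ∞ and sup_{t} ∑ h_n(t)² < ∞ with h_n continuous, and a(t) ≥ a₀ > 0, |e^{∫₀ᵗ b}| ≤ K, |R| ≤ K₂ on [0,T]. Then for each t ∈ (0,T], ∑_{n≥1} (ψ_n e^{-∫₀ᵗ(a(τ)λ_n - b(τ))dτ} + ∫₀ᵗ R(τ) h_n(τ) e^{-∫_τᵗ(a(z)λ_n - b(z))dz} dτ)² ≤ 2C₁ ∑_n ψ_n² + 2C₂ sup_{τ∈[0,t]} ∑_n h_n(τ)² for some constants C₁, C₂ depending only on K, K₂, a₀, T. -/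

import Mathlib

open Real MeasureTheory Set

/-!
Since `a ≥ 0` and `λₙ ≥ 0`, every kernel `exp (-∫_τ^t (a λₙ - b))` with `0 ≤ τ ≤ t ≤ T` is bounded
by `M = exp (T sup |b|)`, uniformly in `n`. Splitting each term with `(x + y)² ≤ 2 (x² + y²)`, the
initial part contributes at most `M² ψₙ²`, and by Cauchy–Schwarz the Duhamel integral contributes at
most `K₂² M² t ∫₀ᵗ hₙ²`; summing the latter under the integral gives `t² sup_τ ∑ₙ hₙ(τ)²`.
-/

theorem sq_intervalIntegral_le_mul_intervalIntegral_sq {f : ℝ → ℝ} {a b : ℝ} (hab : a ≤ b)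
    (hf : IntervalIntegrable f volume a b)
    (hf2 : IntervalIntegrable (fun x => f x ^ 2) volume a b) :
    (∫ x in a..b, f x) ^ 2 ≤ (b - a) * ∫ x in a..b, f x ^ 2 := by
  rcases hab.eq_or_lt with rfl | hlt
  · simp
  have hJensen := (even_two.convexOn_pow (𝕜 := ℝ)).map_set_average_le
    (continuous_pow 2).continuousOn isClosed_univ (by simp [hlt]) (by simp) (by simp) hf.1 hf2.1
  simp only [setAverage_eq, Measure.real, Real.volume_Ioc, ENNReal.toReal_ofReal (sub_nonneg.2 hab),
    smul_eq_mul, mul_pow, ← intervalIntegral.integral_of_le hab] at hJensen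
  have hpos : 0 < b - a := sub_pos.2 hlt
  calc (∫ x in a..b, f x) ^ 2 = (b - a) ^ 2 * ((b - a)⁻¹ ^ 2 * (∫ x in a..b, f x) ^ 2) := by
        field_simp
    _ ≤ (b - a) ^ 2 * ((b - a)⁻¹ * ∫ x in a..b, f x ^ 2) := by gcongr
    _ = (b - a) * ∫ x in a..b, f x ^ 2 := by field_simp

theorem sum_intervalIntegral_le_mul {ι : Type*} (s : Finset ι) {F : ι → ℝ → ℝ} {a b S : ℝ}
    (hab : a ≤ b) (hF : ∀ i ∈ s, IntervalIntegrable (F i) volume a b)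
    (hS : ∀ x ∈ Icc a b, ∑ i ∈ s, F i x ≤ S) :
    ∑ i ∈ s, ∫ x in a..b, F i x ≤ (b - a) * S := by
  rw [← intervalIntegral.integral_finsetSum hF]
  calc ∫ x in a..b, ∑ i ∈ s, F i x ≤ ∫ _ in a..b, S :=
        intervalIntegral.integral_mono_on hab
          (by simpa only [Finset.sum_fn] using IntervalIntegrable.sum s hF)
          intervalIntegrable_const hS
    _ = (b - a) * S := intervalIntegral.integral_const S

theorem exp_neg_integral_mul_sub_le {a b : ℝ → ℝ} {lam C x y : ℝ} (hxy : x ≤ y)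
    (ha : ContinuousOn a (Icc x y)) (hb : ContinuousOn b (Icc x y))
    (ha0 : ∀ z ∈ Icc x y, 0 ≤ a z) (hlam : 0 ≤ lam) (hbC : ∀ z ∈ Icc x y, b z ≤ C) :
    exp (-∫ z in x..y, (a z * lam - b z)) ≤ exp (C * (y - x)) := by
  have hlower : ∫ _ in x..y, -C ≤ ∫ z in x..y, (a z * lam - b z) :=
    intervalIntegral.integral_mono_on hxy intervalIntegrable_const
      (((ha.mul continuousOn_const).sub hb).intervalIntegrable_of_Icc hxy)
      fun z hz => by nlinarith [ha0 z hz, hbC z hz]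
  rw [intervalIntegral.integral_const, smul_eq_mul] at hlower
  exact exp_le_exp.2 (by linarith)

theorem continuousOn_exp_neg_integral {f : ℝ → ℝ} {x y : ℝ} (hxy : x ≤ y)
    (hf : ContinuousOn f (Icc x y)) :
    ContinuousOn (fun τ => exp (-∫ z in τ..y, f z)) (Icc x y) := by
  have hprim := intervalIntegral.continuousOn_primitive_interval_left
    (μ := volume) (b := y) (by rw [uIcc_of_le hxy]; exact hf.integrableOn_Icc)
  rw [uIcc_of_le hxy] at hprim
  exact hprim.neg.rexp

theorem tsum_succ_le_tsum {f : ℕ → ℝ} (hf : Summable f) (h0 : 0 ≤ f 0) :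
    ∑' n, f (n + 1) ≤ ∑' n, f n := by
  rw [hf.tsum_eq_zero_add]
  linarith

theorem sq_intervalIntegral_mul_mul_le {t K M : ℝ} (ht : 0 ≤ t) {R u k : ℝ → ℝ}
    (hR : ContinuousOn R (Icc 0 t)) (hu : ContinuousOn u (Icc 0 t))
    (hk : ContinuousOn k (Icc 0 t)) (hRK : ∀ τ ∈ Icc 0 t, |R τ| ≤ K)
    (hkM : ∀ τ ∈ Icc 0 t, |k τ| ≤ M) :
    (∫ τ in 0..t, R τ * u τ * k τ) ^ 2 ≤ K ^ 2 * M ^ 2 * t * ∫ τ in 0..t, u τ ^ 2 := by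
  have hcont : ContinuousOn (fun τ => R τ * u τ * k τ) (Icc 0 t) := (hR.mul hu).mul hk
  have hpointwise : ∀ τ ∈ Icc 0 t, (R τ * u τ * k τ) ^ 2 ≤ K ^ 2 * M ^ 2 * u τ ^ 2 := by
    intro τ hτ
    calc (R τ * u τ * k τ) ^ 2 = R τ ^ 2 * k τ ^ 2 * u τ ^ 2 := by ring
      _ ≤ K ^ 2 * M ^ 2 * u τ ^ 2 := by
        gcongr ?_ * ?_ * _
        exacts [sq_le_sq.2 ((hRK τ hτ).trans (le_abs_self K)),
          sq_le_sq.2 ((hkM τ hτ).trans (le_abs_self M))]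
  calc (∫ τ in 0..t, R τ * u τ * k τ) ^ 2
      ≤ (t - 0) * ∫ τ in 0..t, (R τ * u τ * k τ) ^ 2 :=
        sq_intervalIntegral_le_mul_intervalIntegral_sq ht (hcont.intervalIntegrable_of_Icc ht)
          ((hcont.pow 2).intervalIntegrable_of_Icc ht)
    _ ≤ t * ∫ τ in 0..t, K ^ 2 * M ^ 2 * u τ ^ 2 := by
        rw [sub_zero]
        exact mul_le_mul_of_nonneg_left (intervalIntegral.integral_mono_on ht
          ((hcont.pow 2).intervalIntegrable_of_Icc ht)
          ((continuousOn_const.mul (hu.pow 2)).intervalIntegrable_of_Icc ht) hpointwise) ht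
    _ = K ^ 2 * M ^ 2 * t * ∫ τ in 0..t, u τ ^ 2 := by
        rw [intervalIntegral.integral_const_mul]; ring

theorem tsum_sq_add_intervalIntegral_le {t M K S : ℝ} (ht : 0 ≤ t) {ψ : ℕ → ℝ}
    {u k : ℕ → ℝ → ℝ} {R : ℝ → ℝ} (hψ : Summable fun n => ψ n ^ 2)
    (hR : ContinuousOn R (Icc 0 t)) (hu : ∀ n, ContinuousOn (u n) (Icc 0 t))
    (hk : ∀ n, ContinuousOn (k n) (Icc 0 t)) (hRK : ∀ τ ∈ Icc 0 t, |R τ| ≤ K)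
    (hkM : ∀ n, ∀ τ ∈ Icc 0 t, |k n τ| ≤ M)
    (hus : ∀ τ ∈ Icc 0 t, Summable fun n => u n τ ^ 2)
    (huS : ∀ τ ∈ Icc 0 t, ∑' n, u n τ ^ 2 ≤ S) :
    ∑' n, (ψ n * k n 0 + ∫ τ in 0..t, R τ * u n τ * k n τ) ^ 2 ≤
      2 * M ^ 2 * ∑' n, ψ n ^ 2 + 2 * (K ^ 2 * M ^ 2 * t ^ 2) * S := by
  have hinit : ∀ n, (ψ n * k n 0) ^ 2 ≤ M ^ 2 * ψ n ^ 2 := fun n => by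
    rw [mul_pow, mul_comm]
    gcongr ?_ * _
    exact sq_le_sq.2 ((hkM n 0 ⟨le_rfl, ht⟩).trans (le_abs_self M))
  have hduhamel := fun n => sq_intervalIntegral_mul_mul_le ht hR (hu n) (hk n) hRK (hkM n)
  refine Real.tsum_le_of_sum_range_le (fun _ => sq_nonneg _) fun N => ?_
  have hψN : ∑ n ∈ Finset.range N, ψ n ^ 2 ≤ ∑' n, ψ n ^ 2 :=
    hψ.sum_le_tsum _ fun _ _ => sq_nonneg _
  have huN : ∑ n ∈ Finset.range N, ∫ τ in 0..t, u n τ ^ 2 ≤ t * S := by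
    simpa using sum_intervalIntegral_le_mul (Finset.range N) ht
      (fun n _ => ((hu n).pow 2).intervalIntegrable_of_Icc ht)
      fun τ hτ => ((hus τ hτ).sum_le_tsum _ fun _ _ => sq_nonneg _).trans (huS τ hτ)
  calc ∑ n ∈ Finset.range N, (ψ n * k n 0 + ∫ τ in 0..t, R τ * u n τ * k n τ) ^ 2
      ≤ ∑ n ∈ Finset.range N, (2 * (M ^ 2 * ψ n ^ 2) +
          2 * (K ^ 2 * M ^ 2 * t * ∫ τ in 0..t, u n τ ^ 2)) := by
        gcongr with n
        refine add_sq_le.trans ?_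
        rw [mul_add]
        gcongr
        exacts [hinit n, hduhamel n]
    _ = 2 * M ^ 2 * ∑ n ∈ Finset.range N, ψ n ^ 2 +
          2 * (K ^ 2 * M ^ 2 * t) * ∑ n ∈ Finset.range N, ∫ τ in 0..t, u n τ ^ 2 := by
        rw [Finset.sum_add_distrib, ← Finset.mul_sum, ← Finset.mul_sum, ← Finset.mul_sum,
          ← Finset.mul_sum]
        ring
    _ ≤ 2 * M ^ 2 * ∑' n, ψ n ^ 2 + 2 * (K ^ 2 * M ^ 2 * t) * (t * S) := by gcongr
    _ = 2 * M ^ 2 * ∑' n, ψ n ^ 2 + 2 * (K ^ 2 * M ^ 2 * t ^ 2) * S := by ring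

theorem L2_bound_of_spectral_solution_general (T : ℝ)
    (ψ : ℕ → ℝ) (h : ℕ → ℝ → ℝ) (a b R : ℝ → ℝ)
    (lam : ℕ → ℝ) (hlam : ∀ n, lam n = (n : ℝ) ^ 2 * Real.pi ^ 2)
    (ha : ContinuousOn a (Set.Icc 0 T)) (hb : ContinuousOn b (Set.Icc 0 T))
    (hR : ContinuousOn R (Set.Icc 0 T))
    (hhcont : ∀ n, ContinuousOn (h n) (Set.Icc 0 T))
    (hψsum : Summable (fun n : ℕ => (ψ n) ^ 2))
    (Mh : ℝ) (hhsum : ∀ t ∈ Set.Icc (0:ℝ) T, Summable (fun n : ℕ => (h n t) ^ 2))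
    (hhbdd : ∀ t ∈ Set.Icc (0:ℝ) T, ∑' n : ℕ, (h n t) ^ 2 ≤ Mh)
    (a₀ : ℝ) (ha₀ : 0 < a₀) (haa : ∀ t ∈ Set.Icc (0:ℝ) T, a₀ ≤ a t)
    (K₂ : ℝ)
    (hK₂ : ∀ t ∈ Set.Icc (0:ℝ) T, |R t| ≤ K₂) :
    ∃ C₁ C₂ : ℝ, 0 < C₁ ∧ 0 < C₂ ∧
      ∀ t ∈ Set.Ioc (0:ℝ) T,
        ∑' n : ℕ,
          (ψ (n + 1) * Real.exp (-∫ τ in (0:ℝ)..t, (a τ * lam (n + 1) - b τ)) +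
            ∫ τ in (0:ℝ)..t,
              R τ * h (n + 1) τ *
                Real.exp (-∫ z in τ..t, (a z * lam (n + 1) - b z))) ^ 2 ≤
        2 * C₁ * (∑' n : ℕ, (ψ n) ^ 2) +
        2 * C₂ * (⨆ τ : Set.Icc (0:ℝ) t, ∑' n : ℕ, (h n τ) ^ 2) := by
  obtain ⟨Cb, hCb⟩ := isCompact_Icc.exists_bound_of_continuousOn hb
  set M := exp (Cb * T)
  refine ⟨M ^ 2, K₂ ^ 2 * M ^ 2 * T ^ 2 + 1, by positivity, by positivity, ?_⟩
  rintro t ⟨ht0, htT⟩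
  have hsub : Icc 0 t ⊆ Icc 0 T := Icc_subset_Icc_right htT
  have hCb0 : 0 ≤ Cb := (norm_nonneg _).trans (hCb 0 ⟨le_rfl, ht0.le.trans htT⟩)
  have hbdd : BddAbove (range fun τ : Icc (0:ℝ) t => ∑' n, h n τ ^ 2) :=
    ⟨Mh, by rintro _ ⟨τ, rfl⟩; exact hhbdd τ (hsub τ.2)⟩
  set S := ⨆ τ : Icc (0:ℝ) t, ∑' n, h n τ ^ 2
  have hhS : ∀ τ ∈ Icc 0 t, ∑' n, h (n + 1) τ ^ 2 ≤ S := fun τ hτ =>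
    (tsum_succ_le_tsum (hhsum τ (hsub hτ)) (sq_nonneg _)).trans (le_ciSup hbdd ⟨τ, hτ⟩)
  have hS0 : 0 ≤ S := (tsum_nonneg fun _ => sq_nonneg _).trans (hhS 0 ⟨le_rfl, ht0.le⟩)
  have hkernel : ∀ n, ∀ τ ∈ Icc 0 t, |exp (-∫ z in τ..t, (a z * lam n - b z))| ≤ M := by
    rintro n τ ⟨hτ0, hτt⟩
    have hτsub : Icc τ t ⊆ Icc 0 T := Icc_subset_Icc hτ0 htT
    rw [abs_of_pos (exp_pos _)]
    exact (exp_neg_integral_mul_sub_le hτt (ha.mono hτsub) (hb.mono hτsub)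
      (fun z hz => ha₀.le.trans (haa z (hτsub hz))) (by rw [hlam]; positivity)
      (fun z hz => (le_abs_self _).trans (hCb z (hτsub hz)))).trans
      (exp_le_exp.2 (mul_le_mul_of_nonneg_left (by linarith) hCb0))
  have hL2 := tsum_sq_add_intervalIntegral_le ht0.le (hψsum.comp_injective (add_left_injective 1))
    (hR.mono hsub) (fun n => (hhcont (n + 1)).mono hsub)
    (fun n => continuousOn_exp_neg_integral (f := fun z => a z * lam (n + 1) - b z) ht0.le
      (((ha.mono hsub).mul continuousOn_const).sub (hb.mono hsub)))
    (fun τ hτ => hK₂ τ (hsub hτ)) (fun n => hkernel (n + 1))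
    (fun τ hτ => (summable_nat_add_iff 1).2 (hhsum τ (hsub hτ))) hhS
  refine hL2.trans ?_
  gcongr 2 * M ^ 2 * ?_ + 2 * ?_ * S
  · exact tsum_succ_le_tsum hψsum (sq_nonneg _)
  · have : K₂ ^ 2 * M ^ 2 * t ^ 2 ≤ K₂ ^ 2 * M ^ 2 * T ^ 2 := by gcongr
    linarith

theorem L2_bound_of_spectral_solution (T : ℝ) (hT : 0 < T)
    (ψ : ℕ → ℝ) (h : ℕ → ℝ → ℝ) (a b R : ℝ → ℝ)
    (lam : ℕ → ℝ) (hlam : ∀ n, lam n = (n : ℝ) ^ 2 * Real.pi ^ 2)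
    (ha : ContinuousOn a (Set.Icc 0 T)) (hb : ContinuousOn b (Set.Icc 0 T))
    (hR : ContinuousOn R (Set.Icc 0 T))
    (hhcont : ∀ n, ContinuousOn (h n) (Set.Icc 0 T))
    (hψsum : Summable (fun n : ℕ => (ψ n) ^ 2))
    (Mh : ℝ) (hhsum : ∀ t ∈ Set.Icc (0:ℝ) T, Summable (fun n : ℕ => (h n t) ^ 2))
    (hhbdd : ∀ t ∈ Set.Icc (0:ℝ) T, ∑' n : ℕ, (h n t) ^ 2 ≤ Mh)
    (a₀ : ℝ) (ha₀ : 0 < a₀) (haa : ∀ t ∈ Set.Icc (0:ℝ) T, a₀ ≤ a t)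
    (K K₂ : ℝ)
    (hK : ∀ t ∈ Set.Icc (0:ℝ) T, |Real.exp (∫ τ in (0:ℝ)..t, b τ)| ≤ K)
    (hK₂ : ∀ t ∈ Set.Icc (0:ℝ) T, |R t| ≤ K₂) :
    ∃ C₁ C₂ : ℝ, 0 < C₁ ∧ 0 < C₂ ∧
      ∀ t ∈ Set.Ioc (0:ℝ) T,
        ∑' n : ℕ,
          (ψ (n + 1) * Real.exp (-∫ τ in (0:ℝ)..t, (a τ * lam (n + 1) - b τ)) +
            ∫ τ in (0:ℝ)..t,
              R τ * h (n + 1) τ *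
                Real.exp (-∫ z in τ..t, (a z * lam (n + 1) - b z))) ^ 2 ≤
        2 * C₁ * (∑' n : ℕ, (ψ n) ^ 2) +
        2 * C₂ * (⨆ τ : Set.Icc (0:ℝ) t, ∑' n : ℕ, (h n τ) ^ 2) :=
  L2_bound_of_spectral_solution_general T ψ h a b R lam hlam ha hb hR hhcont hψsum Mh hhsum hhbdd a₀
    ha₀ haa K₂ hK₂
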